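/- There is a universal constant c₀ > 0 such that the following holds. Let p be an odd prime and let f : (ZMod p)^n → ℂ be a non-constant Boolean function (f(x) ∈ {−1,1} for all x) with spectral norm ‖f̂‖₁ = A. Let α be such that |f̂(α)| is maximal over all Fourier coefficients, β ≠ α such that |f̂(β)| is maximal over all γ ≠ α, and set η = β − α. Write L(λ) = ∑_{γ ∈ T} |∑_{k=0}^{p−1} ω^{λk}·f̂(γ + kη)| for the spectral norm of the restriction of f to {x : χ_η(x) = ω^λ}, where T is a set of coset representatives of ⟨η⟩ in (ZMod p)^n. Then: (1) for every λ ∈ ZMod p, L(λ) ≤ A − c₀·|f̂(β)|; and (2) there exist at least ⌊p/3⌋ distinct elements λ ∈ ZMod p with L(λ) ≤ A − c₀·|f̂(α)| ≤ A − c₀/A. -/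

import Mathlib

/-- `ω = exp(2πi/p)`, a primitive `p`-th root of unity. -/
noncomputable def pomega (p : ℕ) : ℂ :=
  Complex.exp (2 * Real.pi * Complex.I / p)

/-- The character `χ_α(x) = ω^{⟨α,x⟩}` on `(ZMod p)^n` (well-defined via `ZMod.val`
since `ω^p = 1`). -/
noncomputable def pchi (p n : ℕ) (α x : Fin n → ZMod p) : ℂ :=
  pomega p ^ (∑ i, α i * x i : ZMod p).val

/-- The Fourier coefficient `f̂(α) = p^{-n} ∑_x f(x) conj(χ_α(x))`. -/
noncomputable def phat (p n : ℕ) [NeZero p] (f : (Fin n → ZMod p) → ℂ)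
    (α : Fin n → ZMod p) : ℂ :=
  ((p : ℂ) ^ n)⁻¹ * ∑ x : Fin n → ZMod p, f x * (starRingEnd ℂ) (pchi p n α x)

/-!
Write `F = f̂`, `η = β - α`, `A = ∑ |F|`, and `D(γ) = |F γ| + |F (γ+η)| - |F γ + ω^λ F (γ+η)|`
for the triangle defect along the edge `γ → γ + η`. On each coset of `⟨η⟩` these edges form a
cycle of odd length `p`, which splits into three matchings; the triangle inequality along each
matching gives `∑_γ D(γ) ≤ 3 (A - L(λ))`.

When `|F γ| + |F (γ+η)| ≤ M`, one has `|F γ| |F (γ+η)| - Re (ω^{-λ} F γ conj F (γ+η)) ≤ M D(γ)`.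
For Boolean `f` the autocorrelation `∑_γ F γ conj F (γ+η)` vanishes, so the sum of the products
`|F γ| |F (γ+η)|` is at least twice the term `|f̂ α| |f̂ β|` at `γ = α`; with `M = 2 |f̂ α|` this
gives (1) with `c₀ = 1/3`. For (2), if `α ≠ 0` then `|f̂ (-α)| = |f̂ α|` forces `|f̂ β| = |f̂ α|`.
If `α = 0`, the terms at `γ = 0` and `γ = -β` both equal `ζ = f̂ 0 conj f̂ β`, all other terms
involve only coefficients of size at most `|f̂ β|` (so `M = 2 |f̂ β|`), and
`Re (ω^{-λ} ζ) ≥ -|ζ|/2` holds for at least a third of the `λ`, because these real parts sum to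
zero; this gives (2) with `c₀ = 1/6`. Finally Parseval gives `|f̂ α| A ≥ 1`.
-/

open Finset ComplexConjugate

local notation "ψ" => ZMod.stdAddChar

section Fourier

variable {p n : ℕ} [NeZero p]

lemma pomega_pow (m : ℕ) : pomega p ^ m = ψ (m : ZMod p) := by
  rw [ZMod.stdAddChar_apply, ZMod.toCircle_natCast, pomega, ← Complex.exp_nat_mul]
  ring_nf

lemma pchi_eq (α x : Fin n → ZMod p) : pchi p n α x = ψ (α ⬝ᵥ x) := by
  rw [pchi, pomega_pow, ZMod.natCast_zmod_val]
  rfl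

lemma sum_stdAddChar_dotProduct (z : Fin n → ZMod p) :
    ∑ γ : Fin n → ZMod p, ψ (γ ⬝ᵥ z) = if z = 0 then (p : ℂ) ^ n else 0 := by
  classical
  let χ : AddChar (Fin n → ZMod p) ℂ :=
    AddChar.compAddMonoidHom ψ (AddMonoidHom.mk' (· ⬝ᵥ z) fun a b => add_dotProduct a b z)
  have hχ : χ = 0 ↔ z = 0 := by
    refine ⟨fun h => funext fun i => ?_, fun h => by ext γ; simp [χ, h]⟩
    have := DFunLike.congr_fun h (Pi.single i 1)
    simpa [χ, single_dotProduct, ZMod.injective_stdAddChar.eq_iff'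
      (ZMod.stdAddChar.map_zero_eq_one)] using this
  simpa [χ, hχ, Fintype.card_fun] using AddChar.sum_eq_ite χ

lemma phat_eq (f : (Fin n → ZMod p) → ℂ) (γ : Fin n → ZMod p) :
    phat p n f γ = ((p : ℂ) ^ n)⁻¹ * ∑ x, f x * ψ (-(γ ⬝ᵥ x)) := by
  simp only [phat, pchi_eq, AddChar.map_neg_eq_conj]

lemma sum_phat_mul_stdAddChar (f : (Fin n → ZMod p) → ℂ) (x : Fin n → ZMod p) :
    ∑ γ, phat p n f γ * ψ (γ ⬝ᵥ x) = f x := by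
  have hp : (p : ℂ) ^ n ≠ 0 := pow_ne_zero _ (Nat.cast_ne_zero.2 (NeZero.ne p))
  calc ∑ γ, phat p n f γ * ψ (γ ⬝ᵥ x)
      = ((p : ℂ) ^ n)⁻¹ * ∑ y, f y * ∑ γ : Fin n → ZMod p, ψ (γ ⬝ᵥ (x - y)) := by
        simp only [phat_eq, mul_sum, sum_mul]
        rw [sum_comm]
        refine sum_congr rfl fun y _ => sum_congr rfl fun γ _ => ?_
        rw [dotProduct_sub, sub_eq_neg_add, AddChar.map_add_eq_mul]
        ring
    _ = f x := by
        simp_rw [sum_stdAddChar_dotProduct, sub_eq_zero]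
        simp
        field_simp

lemma sum_phat_mul_conj_phat_add (f : (Fin n → ZMod p) → ℂ) (δ : Fin n → ZMod p) :
    ∑ γ, phat p n f γ * conj (phat p n f (γ + δ))
      = ((p : ℂ) ^ n)⁻¹ * ∑ x, f x * conj (f x) * ψ (δ ⬝ᵥ x) := by
  have hp : (p : ℂ) ^ n ≠ 0 := pow_ne_zero _ (Nat.cast_ne_zero.2 (NeZero.ne p))
  calc ∑ γ, phat p n f γ * conj (phat p n f (γ + δ))
      = ((p : ℂ) ^ n)⁻¹ * ((p : ℂ) ^ n)⁻¹ * ∑ x, ∑ y, f x * conj (f y) * ψ (δ ⬝ᵥ y) *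
          ∑ γ : Fin n → ZMod p, ψ (γ ⬝ᵥ (y - x)) := by
        simp only [phat_eq, map_mul, map_sum, map_inv₀, map_pow, map_natCast,
          ← AddChar.map_neg_eq_conj, neg_neg, mul_sum, sum_mul]
        rw [sum_comm]
        conv_rhs => rw [sum_comm]
        refine sum_congr rfl fun y _ => ?_
        rw [sum_comm]
        refine sum_congr rfl fun x _ => sum_congr rfl fun γ _ => ?_
        rw [add_dotProduct, dotProduct_sub, AddChar.map_add_eq_mul, sub_eq_neg_add,
          AddChar.map_add_eq_mul]
        ring
    _ = ((p : ℂ) ^ n)⁻¹ * ∑ x, f x * conj (f x) * ψ (δ ⬝ᵥ x) := by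
        simp_rw [sum_stdAddChar_dotProduct, sub_eq_zero]
        simp only [mul_ite, mul_zero, sum_ite_eq', mem_univ, if_true, mul_sum]
        refine sum_congr rfl fun x _ => by field_simp

variable {f : (Fin n → ZMod p) → ℂ}

lemma sum_phat_mul_conj_phat_add_of_norm_eq_one (hf : ∀ x, ‖f x‖ = 1) (δ : Fin n → ZMod p) :
    ∑ γ, phat p n f γ * conj (phat p n f (γ + δ)) = if δ = 0 then 1 else 0 := by
  have hp : (p : ℂ) ^ n ≠ 0 := pow_ne_zero _ (Nat.cast_ne_zero.2 (NeZero.ne p))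
  simp_rw [sum_phat_mul_conj_phat_add, Complex.mul_conj, Complex.normSq_eq_norm_sq, hf,
    one_pow, Complex.ofReal_one, one_mul, dotProduct_comm δ, sum_stdAddChar_dotProduct]
  split_ifs <;> simp [hp]

lemma sum_norm_phat_sq (hf : ∀ x, ‖f x‖ = 1) : ∑ γ, ‖phat p n f γ‖ ^ 2 = 1 := by
  have h := sum_phat_mul_conj_phat_add_of_norm_eq_one hf 0
  simp_rw [add_zero, Complex.mul_conj, Complex.normSq_eq_norm_sq, if_true] at h
  exact_mod_cast h

lemma phat_neg (hf : ∀ x, conj (f x) = f x) (γ : Fin n → ZMod p) :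
    phat p n f (-γ) = conj (phat p n f γ) := by
  simp [phat_eq, map_sum, hf, ← AddChar.map_neg_eq_conj]

lemma exists_phat_ne_zero_of_ne (hf : ∃ x y, f x ≠ f y) :
    ∃ γ ≠ 0, phat p n f γ ≠ 0 := by
  by_contra! h
  have hconst : ∀ x, f x = phat p n f 0 := fun x => by
    rw [← sum_phat_mul_stdAddChar f x, Fintype.sum_eq_single 0 fun γ hγ => by simp [h γ hγ]]
    simp
  obtain ⟨x, y, hxy⟩ := hf
  exact hxy ((hconst x).trans (hconst y).symm)

end Fourier

section TriangleDefect
variable {E : Type*} [SeminormedAddCommGroup E]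

def triangleDefect (z w : E) : ℝ := ‖z‖ + ‖w‖ - ‖z + w‖

lemma triangleDefect_nonneg (z w : E) : 0 ≤ triangleDefect z w := by
  unfold triangleDefect; linarith [norm_add_le z w]

lemma monotone_sum_norm_sub_norm_sum (u : ℕ → E) :
    Monotone fun N => ∑ k ∈ range N, ‖u k‖ - ‖∑ k ∈ range N, u k‖ :=
  monotone_nat_of_le_succ fun N => by
    simp only [sum_range_succ]
    linarith [norm_add_le (∑ k ∈ range N, u k) (u N)]

lemma sum_triangleDefect_pairs_le (u : ℕ → E) (m : ℕ) :
    ∑ i ∈ range m, triangleDefect (u (2 * i)) (u (2 * i + 1))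
      ≤ ∑ k ∈ range (2 * m), ‖u k‖ - ‖∑ k ∈ range (2 * m), u k‖ := by
  induction m with
  | zero => simp
  | succ m ih =>
    rw [sum_range_succ, Nat.mul_succ, sum_range_succ, sum_range_succ, sum_range_succ,
      sum_range_succ, add_assoc (∑ k ∈ range (2 * m), u k)]
    have hd : triangleDefect (u (2 * m)) (u (2 * m + 1))
        = ‖u (2 * m)‖ + ‖u (2 * m + 1)‖ - ‖u (2 * m) + u (2 * m + 1)‖ := rfl
    linarith [norm_add_le (∑ k ∈ range (2 * m), u k) (u (2 * m) + u (2 * m + 1))]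

lemma sum_range_two_mul {M : Type*} [AddCommMonoid M] (g : ℕ → M) (m : ℕ) :
    ∑ k ∈ range (2 * m), g k = ∑ i ∈ range m, (g (2 * i) + g (2 * i + 1)) := by
  induction m with
  | zero => simp
  | succ m ih => rw [Nat.mul_succ, sum_range_succ, sum_range_succ, ih, sum_range_succ, add_assoc]

lemma sum_range_zmod {M : Type*} [AddCommMonoid M] {N : ℕ} [NeZero N] (g : ZMod N → M) :
    ∑ k ∈ range N, g k = ∑ k, g k :=
  sum_nbij' (fun k => k) ZMod.val (fun _ _ => mem_univ _)
    (fun k _ => mem_range.2 (ZMod.val_lt k))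
    (fun _ hk => ZMod.val_cast_of_lt (mem_range.1 hk)) (fun k _ => ZMod.natCast_zmod_val k)
    (fun _ _ => rfl)

lemma sum_range_zmod_add {M : Type*} [AddCommMonoid M] {N : ℕ} [NeZero N] (g : ZMod N → M)
    (r : ZMod N) : ∑ k ∈ range N, g (r + k) = ∑ k, g k := by
  rw [sum_range_zmod (fun k => g (r + k))]
  exact Fintype.sum_equiv (Equiv.addLeft r) _ _ fun _ => rfl

lemma sum_triangleDefect_pairs_zmod_le {N : ℕ} [NeZero N] (u : ZMod N → E) (r : ZMod N)
    {m : ℕ} (hm : 2 * m ≤ N) :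
    ∑ i ∈ range m, triangleDefect (u (r + 2 * i)) (u (r + 2 * i + 1))
      ≤ ∑ k, ‖u k‖ - ‖∑ k, u k‖ := by
  have h := (sum_triangleDefect_pairs_le (fun k : ℕ => u (r + k)) m).trans
    (monotone_sum_norm_sub_norm_sum (fun k : ℕ => u (r + k)) hm)
  push_cast at h
  simp only [← add_assoc] at h
  rwa [sum_range_zmod_add (fun k => ‖u k‖), sum_range_zmod_add u] at h

/-- The edges of an odd cycle split into three matchings: the edges `(2i, 2i+1)`, the edges
`(2i+1, 2i+2)`, and the single edge `(N-1, 0)`. -/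
theorem sum_triangleDefect_cyclic_le {N : ℕ} [NeZero N] (hN : Odd N) (hN1 : 1 < N)
    (u : ZMod N → E) :
    ∑ k, triangleDefect (u k) (u (k + 1)) ≤ 3 * (∑ k, ‖u k‖ - ‖∑ k, u k‖) := by
  obtain ⟨m, rfl⟩ := hN
  have hc : 2 * (m : ZMod (2 * m + 1)) + 1 = 0 := by exact_mod_cast ZMod.natCast_self (2 * m + 1)
  have h_even := sum_triangleDefect_pairs_zmod_le u 0 (m := m) (by omega)
  have h_odd := sum_triangleDefect_pairs_zmod_le u 1 (m := m) (by omega)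
  have h_last := sum_triangleDefect_pairs_zmod_le u (2 * m) (m := 1) (by omega)
  rw [← sum_range_zmod, sum_range_succ, sum_range_two_mul, sum_add_distrib]
  push_cast
  simp only [zero_add, add_comm (1 : ZMod _), sum_range_one, Nat.cast_zero, mul_zero,
    add_zero] at h_even h_odd h_last
  rw [hc] at h_last ⊢
  linarith

lemma triangleDefect_mul_left {R : Type*} [SeminormedRing R] [NormMulClass R] {c : R}
    (hc : ‖c‖ = 1) (z w : R) : triangleDefect (c * z) (c * w) = triangleDefect z w := by
  simp only [triangleDefect, ← mul_add, norm_mul, hc, one_mul]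

/-- Since `‖z + w‖² = ‖z‖² + ‖w‖² + 2 re (z w̄)`, the left side equals
`(‖z‖ + ‖w‖ + ‖z + w‖) · triangleDefect z w / 2`. -/
lemma norm_mul_norm_sub_re_le (z w : ℂ) {M : ℝ} (h : ‖z‖ + ‖w‖ ≤ M) :
    ‖z‖ * ‖w‖ - (z * conj w).re ≤ M * triangleDefect z w := by
  have hsq : ‖z + w‖ ^ 2 = ‖z‖ ^ 2 + ‖w‖ ^ 2 + 2 * (z * conj w).re := by
    simp only [Complex.sq_norm, Complex.normSq_add, Complex.mul_re, Complex.conj_re,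
      Complex.conj_im]
  unfold triangleDefect
  nlinarith [norm_add_le z w, norm_nonneg (z + w)]

end TriangleDefect

lemma two_mul_norm_le_sum_norm_of_sum_eq_zero {ι E : Type*} [SeminormedAddCommGroup E]
    [DecidableEq ι] {s : Finset ι} {w : ι → E} (hw : ∑ i ∈ s, w i = 0) {j : ι} (hj : j ∈ s) :
    2 * ‖w j‖ ≤ ∑ i ∈ s, ‖w i‖ := by
  rw [← add_sum_erase s _ hj] at hw ⊢
  have : ‖w j‖ ≤ ∑ i ∈ s.erase j, ‖w i‖ := by
    rw [eq_neg_of_add_eq_zero_left hw, norm_neg]; exact norm_sum_le _ _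
  linarith

lemma card_le_three_mul_card_filter {ι : Type*} [Fintype ι] (x : ι → ℝ) {c : ℝ} (hc : 0 < c)
    (hsum : ∑ i, x i = 0) (hle : ∀ i, x i ≤ c) :
    Fintype.card ι ≤ 3 * #{i | -(c / 2) ≤ x i} := by
  classical
  set S : Finset ι := {i | -(c / 2) ≤ x i}
  have hS : ∑ i ∈ S, x i ≤ #S * c := by
    simpa using sum_le_card_nsmul S x c fun i _ => hle i
  have hSc : ∑ i ∈ Sᶜ, x i ≤ #Sᶜ * -(c / 2) := by
    simpa only [nsmul_eq_mul] using sum_le_card_nsmul Sᶜ x _ fun i hi => by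
      simp only [S, compl_filter, mem_filter, not_le] at hi; exact hi.2.le
  have hcard : (#Sᶜ : ℝ) = Fintype.card ι - #S := by
    rw [card_compl, Nat.cast_sub (card_le_univ S)]
  rw [← sum_add_sum_compl S] at hsum
  rw [hcard] at hSc
  have : (Fintype.card ι : ℝ) ≤ 3 * #S := by nlinarith
  exact_mod_cast this

lemma le_three_mul_card_filter_re_conj_stdAddChar_mul {N : ℕ} [NeZero N] (hN : 1 < N) {ζ : ℂ}
    (hζ : ζ ≠ 0) : N ≤ 3 * #{l : ZMod N | -(‖ζ‖ / 2) ≤ (conj (ψ l) * ζ).re} := by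
  have : Fact (1 < N) := ⟨hN⟩
  have hψ : (ψ : AddChar (ZMod N) ℂ) ≠ 0 := AddChar.ne_zero_iff.2 ⟨1, fun h =>
    one_ne_zero (ZMod.injective_stdAddChar (h.trans (AddChar.map_zero_eq_one _).symm))⟩
  have hsum : ∑ l : ZMod N, (conj (ψ l) * ζ).re = 0 := by
    rw [← Complex.re_sum, ← sum_mul, ← map_sum, AddChar.sum_eq_zero_iff_ne_zero.2 hψ]
    simp
  simpa using card_le_three_mul_card_filter _ (norm_pos_iff.2 hζ) hsum fun l =>
    (Complex.re_le_norm _).trans (by simp [AddChar.norm_apply])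

def IsLineTransversal {V : Type*} (K : Type*) [Add V] [SMul K V] (T : Finset V) (η : V) : Prop :=
  ∀ γ : V, ∃! t, t ∈ T ∧ ∃ k : K, γ = t + k • η

lemma sum_sum_add_smul_eq_sum {K V M : Type*} [Field K] [Fintype K] [AddCommGroup V] [Module K V]
    [Fintype V] [AddCommMonoid M] {η : V} (hη : η ≠ 0) {T : Finset V}
    (hT : IsLineTransversal K T η) (G : V → M) :
    ∑ t ∈ T, ∑ k : K, G (t + k • η) = ∑ γ, G γ := by
  rw [← sum_product']
  refine sum_bij (fun tk _ => tk.1 + tk.2 • η) (fun _ _ => mem_univ _) ?_ ?_ fun _ _ => rfl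
  · rintro ⟨t, k⟩ htk ⟨t', k'⟩ htk' h
    simp only [mem_product, mem_univ, and_true] at htk htk'
    obtain rfl : t' = t := (hT (t + k • η)).unique ⟨htk', k', h⟩ ⟨htk, k, rfl⟩
    simp only [add_right_inj] at h
    rw [smul_left_injective K hη h]
  · intro γ _
    obtain ⟨t, ⟨ht, k, rfl⟩, -⟩ := hT γ
    exact ⟨(t, k), mem_product.2 ⟨ht, mem_univ _⟩, rfl⟩

/-- For `F = f̂` this is the spectral norm of `f` restricted to `{x | χ_η(x) = ω ^ l}`. -/
noncomputable def restrictedSpectralNorm {p : ℕ} [NeZero p] {V : Type*} [AddCommGroup V]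
    [Module (ZMod p) V] (F : V → ℂ) (T : Finset V) (η : V) (l : ZMod p) : ℝ :=
  ∑ t ∈ T, ‖∑ k : ZMod p, ψ (l * k) * F (t + k • η)‖

lemma restrictedSpectralNorm_eq_sum_range {p : ℕ} [NeZero p] {V : Type*} [AddCommGroup V]
    [Module (ZMod p) V] (F : V → ℂ) (T : Finset V) (η : V) (l : ZMod p) :
    restrictedSpectralNorm F T η l
      = ∑ t ∈ T, ‖∑ k ∈ range p, pomega p ^ (l.val * k) * F (t + k • η)‖ := by
  refine sum_congr rfl fun t _ => congrArg _ ?_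
  rw [← sum_range_zmod]
  refine sum_congr rfl fun k _ => ?_
  rw [pomega_pow, Nat.cast_smul_eq_nsmul]
  push_cast
  rw [ZMod.natCast_zmod_val]

section Restriction
variable {p : ℕ} [Fact p.Prime] {V : Type*} [AddCommGroup V] [Module (ZMod p) V] [Fintype V]
  (F : V → ℂ) {η : V} {T : Finset V}

theorem sum_triangleDefect_le (hp : p ≠ 2) (hη : η ≠ 0) (hT : IsLineTransversal (ZMod p) T η)
    (l : ZMod p) :
    ∑ γ, triangleDefect (F γ) (ψ l * F (γ + η))
      ≤ 3 * (∑ γ, ‖F γ‖ - restrictedSpectralNorm F T η l) := by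
  have hcoset (t : V) :
      ∑ k : ZMod p, triangleDefect (F (t + k • η)) (ψ l * F (t + k • η + η))
        ≤ 3 * (∑ k : ZMod p, ‖F (t + k • η)‖ - ‖∑ k : ZMod p, ψ (l * k) * F (t + k • η)‖) := by
    have := sum_triangleDefect_cyclic_le ((Fact.out : p.Prime).odd_of_ne_two hp)
      (Fact.out : p.Prime).one_lt fun k => ψ (l * k) * F (t + k • η)
    simpa only [mul_add, mul_one, AddChar.map_add_eq_mul, add_smul, one_smul, ← add_assoc,
      mul_assoc, triangleDefect_mul_left, norm_mul, AddChar.norm_apply, one_mul] using this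
  calc ∑ γ, triangleDefect (F γ) (ψ l * F (γ + η))
      = ∑ t ∈ T, ∑ k : ZMod p, triangleDefect (F (t + k • η)) (ψ l * F (t + k • η + η)) :=
        (sum_sum_add_smul_eq_sum hη hT _).symm
    _ ≤ ∑ t ∈ T, 3 * (∑ k : ZMod p, ‖F (t + k • η)‖
          - ‖∑ k : ZMod p, ψ (l * k) * F (t + k • η)‖) := sum_le_sum fun t _ => hcoset t
    _ = 3 * (∑ γ, ‖F γ‖ - restrictedSpectralNorm F T η l) := by
        rw [← mul_sum, sum_sub_distrib, sum_sum_add_smul_eq_sum hη hT fun γ => ‖F γ‖]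
        rfl

theorem sum_norm_mul_norm_sub_re_le (hp : p ≠ 2) (hη : η ≠ 0)
    (hT : IsLineTransversal (ZMod p) T η) (s : Finset V) {M : ℝ} (hM0 : 0 ≤ M)
    (hM : ∀ γ ∈ s, ‖F γ‖ + ‖F (γ + η)‖ ≤ M) (l : ZMod p) :
    ∑ γ ∈ s, ‖F γ‖ * ‖F (γ + η)‖ - (conj (ψ l) * ∑ γ ∈ s, F γ * conj (F (γ + η))).re
      ≤ 3 * M * (∑ γ, ‖F γ‖ - restrictedSpectralNorm F T η l) := by
  calc ∑ γ ∈ s, ‖F γ‖ * ‖F (γ + η)‖ - (conj (ψ l) * ∑ γ ∈ s, F γ * conj (F (γ + η))).re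
      = ∑ γ ∈ s, (‖F γ‖ * ‖ψ l * F (γ + η)‖ - (F γ * conj (ψ l * F (γ + η))).re) := by
        simp only [mul_sum, Complex.re_sum, sum_sub_distrib, norm_mul, AddChar.norm_apply,
          one_mul, map_mul, mul_left_comm]
    _ ≤ ∑ γ ∈ s, M * triangleDefect (F γ) (ψ l * F (γ + η)) :=
        sum_le_sum fun γ hγ => norm_mul_norm_sub_re_le _ _
          (by rw [norm_mul, AddChar.norm_apply, one_mul]; exact hM γ hγ)
    _ ≤ ∑ γ, M * triangleDefect (F γ) (ψ l * F (γ + η)) :=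
        sum_le_sum_of_subset_of_nonneg (subset_univ _) fun _ _ _ =>
          mul_nonneg hM0 (triangleDefect_nonneg _ _)
    _ ≤ 3 * M * (∑ γ, ‖F γ‖ - restrictedSpectralNorm F T η l) := by
        rw [← mul_sum, mul_comm 3, mul_assoc]
        exact mul_le_mul_of_nonneg_left (sum_triangleDefect_le F hp hη hT l) hM0

end Restriction

section BooleanFunction
variable {p n : ℕ} [Fact p.Prime] {f : (Fin n → ZMod p) → ℂ} {α β : Fin n → ZMod p}
  {T : Finset (Fin n → ZMod p)}

lemma one_le_norm_phat_mul_sum (hf : ∀ x, ‖f x‖ = 1) (hα : ∀ γ, ‖phat p n f γ‖ ≤ ‖phat p n f α‖) :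
    1 ≤ ‖phat p n f α‖ * ∑ γ, ‖phat p n f γ‖ := by
  rw [← sum_norm_phat_sq hf, mul_sum]
  exact sum_le_sum fun γ _ => by
    rw [sq]; exact mul_le_mul_of_nonneg_right (hα γ) (norm_nonneg _)

theorem restrictedSpectralNorm_le_sub_third (hp : p ≠ 2) (hf : ∀ x, ‖f x‖ = 1)
    (hα : ∀ γ, ‖phat p n f γ‖ ≤ ‖phat p n f α‖) (hβα : β ≠ α)
    (hT : IsLineTransversal (ZMod p) T (β - α)) (l : ZMod p) :
    restrictedSpectralNorm (phat p n f) T (β - α) l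
      ≤ ∑ γ, ‖phat p n f γ‖ - ‖phat p n f β‖ / 3 := by
  set F := phat p n f
  have hη : β - α ≠ 0 := sub_ne_zero.2 hβα
  have ha : 0 < ‖F α‖ := by
    by_contra! h
    have := one_le_norm_phat_mul_sum hf hα
    nlinarith [norm_nonneg (F α), sum_nonneg fun γ (_ : γ ∈ univ) => norm_nonneg (F γ)]
  have hw : ∑ γ, F γ * conj (F (γ + (β - α))) = 0 := by
    rw [sum_phat_mul_conj_phat_add_of_norm_eq_one hf, if_neg hη]
  have hW : 2 * (‖F α‖ * ‖F β‖) ≤ ∑ γ, ‖F γ‖ * ‖F (γ + (β - α))‖ := by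
    simpa [norm_mul] using two_mul_norm_le_sum_norm_of_sum_eq_zero hw (mem_univ α)
  have key := sum_norm_mul_norm_sub_re_le F hp hη hT univ (M := 2 * ‖F α‖) (by positivity)
    (fun γ _ => by linarith [hα γ, hα (γ + (β - α))]) l
  rw [hw, mul_zero, Complex.zero_re, sub_zero] at key
  nlinarith

lemma sum_erase_erase_phat_mul_conj_phat_add (hf : ∀ x, ‖f x‖ = 1)
    (hfr : ∀ x, conj (f x) = f x) (hβ : β ≠ 0) :
    ∑ γ ∈ (univ.erase 0).erase (-β), phat p n f γ * conj (phat p n f (γ + β))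
      = -(2 * (phat p n f 0 * conj (phat p n f β))) := by
  have h := sum_phat_mul_conj_phat_add_of_norm_eq_one hf β
  rw [if_neg hβ, ← add_sum_erase _ _ (mem_univ 0),
    ← add_sum_erase _ _ (mem_erase.2 ⟨neg_ne_zero.2 hβ, mem_univ (-β)⟩)] at h
  have h0 : conj (phat p n f 0) = phat p n f 0 := by rw [← phat_neg hfr, neg_zero]
  rw [zero_add, neg_add_cancel, phat_neg hfr, h0] at h
  linear_combination h

theorem exists_restrictedSpectralNorm_le_sub_sixth_of_isMax_zero (hp : p ≠ 2)
    (hf : ∀ x, ‖f x‖ = 1) (hfr : ∀ x, conj (f x) = f x) (hnc : ∃ x y, f x ≠ f y)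
    (hα : ∀ γ, ‖phat p n f γ‖ ≤ ‖phat p n f 0‖) (hβ0 : β ≠ 0)
    (hβ : ∀ γ, γ ≠ 0 → ‖phat p n f γ‖ ≤ ‖phat p n f β‖)
    (hT : IsLineTransversal (ZMod p) T β) :
    ∃ S : Finset (ZMod p), p / 3 ≤ #S ∧ ∀ l ∈ S,
      restrictedSpectralNorm (phat p n f) T β l ≤ ∑ γ, ‖phat p n f γ‖ - ‖phat p n f 0‖ / 6 := by
  set F := phat p n f
  set ζ := F 0 * conj (F β)
  have hb : 0 < ‖F β‖ := by
    obtain ⟨γ, hγ0, hγ⟩ := exists_phat_ne_zero_of_ne hnc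
    exact (norm_pos_iff.2 hγ).trans_le (hβ γ hγ0)
  have ha : 0 < ‖F 0‖ := hb.trans_le (hα β)
  have hζ : ‖ζ‖ = ‖F 0‖ * ‖F β‖ := by simp [ζ]
  refine ⟨({l | -(‖ζ‖ / 2) ≤ (conj (ψ l) * ζ).re} : Finset (ZMod p)), ?_, fun l hl => ?_⟩
  · have := le_three_mul_card_filter_re_conj_stdAddChar_mul (Fact.out : p.Prime).one_lt
      (ζ := ζ) (norm_pos_iff.1 (hζ ▸ mul_pos ha hb))
    omega
  have hl : -(‖ζ‖ / 2) ≤ (conj (ψ l) * ζ).re := (mem_filter.1 hl).2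
  set s := (univ.erase (0 : Fin n → ZMod p)).erase (-β)
  have hs : ∀ γ ∈ s, γ ≠ 0 ∧ γ + β ≠ 0 := fun γ hγ =>
    ⟨ne_of_mem_erase (mem_of_mem_erase hγ),
      fun h => ne_of_mem_erase hγ (eq_neg_of_add_eq_zero_left h)⟩
  have hsum : ∑ γ ∈ s, F γ * conj (F (γ + β)) = -(2 * ζ) :=
    sum_erase_erase_phat_mul_conj_phat_add hf hfr hβ0
  have hW : 2 * ‖ζ‖ ≤ ∑ γ ∈ s, ‖F γ‖ * ‖F (γ + β)‖ := by
    calc 2 * ‖ζ‖ = ‖∑ γ ∈ s, F γ * conj (F (γ + β))‖ := by simp [hsum]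
      _ ≤ ∑ γ ∈ s, ‖F γ‖ * ‖F (γ + β)‖ := (norm_sum_le _ _).trans_eq (by simp)
  have key := sum_norm_mul_norm_sub_re_le F hp hβ0 hT s (M := 2 * ‖F β‖) (by positivity)
    (fun γ hγ => by linarith [hβ γ (hs γ hγ).1, hβ (γ + β) (hs γ hγ).2]) l
  have hre : conj (ψ l) * -(2 * ζ) = ((-2 : ℝ) : ℂ) * (conj (ψ l) * ζ) := by push_cast; ring
  rw [hsum, hre, Complex.re_ofReal_mul] at key
  nlinarith

theorem exists_restrictedSpectralNorm_le_sub_sixth (hp : p ≠ 2) (hf : ∀ x, ‖f x‖ = 1)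
    (hfr : ∀ x, conj (f x) = f x) (hnc : ∃ x y, f x ≠ f y)
    (hα : ∀ γ, ‖phat p n f γ‖ ≤ ‖phat p n f α‖) (hβα : β ≠ α)
    (hβ : ∀ γ, γ ≠ α → ‖phat p n f γ‖ ≤ ‖phat p n f β‖)
    (hT : IsLineTransversal (ZMod p) T (β - α)) :
    ∃ S : Finset (ZMod p), p / 3 ≤ #S ∧ ∀ l ∈ S,
      restrictedSpectralNorm (phat p n f) T (β - α) l
        ≤ ∑ γ, ‖phat p n f γ‖ - ‖phat p n f α‖ / 6 := by
  rcases eq_or_ne α 0 with rfl | hα0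
  · rw [sub_zero] at hT ⊢
    exact exists_restrictedSpectralNorm_le_sub_sixth_of_isMax_zero hp hf hfr hnc hα hβα hβ hT
  -- the coefficient at `-α` is as large as the one at `α`, so the second largest is too
  have h2 : (2 : ZMod p) ≠ 0 := Ring.two_ne_zero (by rwa [ZMod.ringChar_zmod_n])
  have hneg : -α ≠ α := fun h => hα0 <| (smul_eq_zero.1 (by
    rw [two_smul]; nth_rw 1 [← h]; exact neg_add_cancel α)).resolve_left h2
  have hba : ‖phat p n f α‖ ≤ ‖phat p n f β‖ := by
    simpa [phat_neg hfr] using hβ (-α) hneg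
  refine ⟨univ, by simp [Nat.div_le_self], fun l _ => ?_⟩
  linarith [restrictedSpectralNorm_le_sub_third hp hf hα hβα hT l, norm_nonneg (phat p n f α)]

end BooleanFunction

/-- **Lemma 4.1** (Main Lemma over `ZMod p`, items 1 and 2): there is a universal
constant `c₀ > 0` such that for a non-constant Boolean `f : (ZMod p)^n → {−1,1}`
(`p` an odd prime) with spectral norm `A`, largest coefficient `f̂(α)` and second
largest `f̂(β)`, writing `η = β − α` and
`L(λ) = ∑_{γ ∈ T} |∑_{k<p} ω^{λk} f̂(γ+kη)|` for the spectral norm of the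
restriction to `{x : χ_η(x) = ω^λ}` (`T` a set of coset representatives of `⟨η⟩`):
(1) `L(λ) ≤ A − c₀|f̂(β)|` for every `λ`, and (2) at least `⌊p/3⌋` distinct
`λ ∈ ZMod p` satisfy `L(λ) ≤ A − c₀|f̂(α)| ≤ A − c₀/A`. -/
theorem p_main_lemma : ∃ c₀ : ℝ, 0 < c₀ ∧
    ∀ (p n : ℕ) (hp : p.Prime), p ≠ 2 →
    haveI : NeZero p := ⟨hp.ne_zero⟩
    ∀ (f : (Fin n → ZMod p) → ℂ), (∀ x, f x = 1 ∨ f x = -1) →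
    (∃ x y, f x ≠ f y) →
    ∀ A : ℝ, (∑ γ : Fin n → ZMod p, ‖phat p n f γ‖) = A →
    ∀ α β : Fin n → ZMod p,
      (∀ γ, ‖phat p n f γ‖ ≤ ‖phat p n f α‖) →
      β ≠ α →
      (∀ γ, γ ≠ α → ‖phat p n f γ‖ ≤ ‖phat p n f β‖) →
    ∀ T : Finset (Fin n → ZMod p),
      (∀ γ : Fin n → ZMod p, ∃! t, t ∈ T ∧ ∃ k : ZMod p, γ = t + k • (β - α)) →
      (∀ l : ZMod p,
        (∑ γ ∈ T, ‖∑ k ∈ Finset.range p,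
            pomega p ^ (l.val * k) * phat p n f (γ + k • (β - α))‖)
          ≤ A - c₀ * ‖phat p n f β‖) ∧
      (∃ S : Finset (ZMod p), p / 3 ≤ S.card ∧
        ∀ l ∈ S,
          (∑ γ ∈ T, ‖∑ k ∈ Finset.range p,
              pomega p ^ (l.val * k) * phat p n f (γ + k • (β - α))‖)
            ≤ A - c₀ * ‖phat p n f α‖ ∧
          A - c₀ * ‖phat p n f α‖ ≤ A - c₀ / A) := by
  refine ⟨1 / 6, by norm_num, fun p n hp hp2 f hf hnc A hA α β hα hβα hβ T hT => ?_⟩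
  have : Fact p.Prime := ⟨hp⟩
  have hf1 : ∀ x, ‖f x‖ = 1 := fun x => by rcases hf x with h | h <;> simp [h]
  have hfr : ∀ x, conj (f x) = f x := fun x => by rcases hf x with h | h <;> simp [h]
  simp only [← restrictedSpectralNorm_eq_sum_range]
  subst hA
  have hαA := one_le_norm_phat_mul_sum hf1 hα
  have hA0 : 0 < ∑ γ, ‖phat p n f γ‖ := pos_of_mul_pos_right (by linarith) (norm_nonneg _)
  obtain ⟨S, hS, hSL⟩ := exists_restrictedSpectralNorm_le_sub_sixth hp2 hf1 hfr hnc hα hβα hβ hT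
  refine ⟨fun l => ?_, S, hS, fun l hl => ⟨by linarith [hSL l hl], ?_⟩⟩
  · linarith [restrictedSpectralNorm_le_sub_third hp2 hf1 hα hβα hT l,
      norm_nonneg (phat p n f β)]
  · rw [sub_le_sub_iff_left, div_le_iff₀ hA0]
    linarith
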